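/- (Quantum teleportation identity) Let α, β ∈ ℂ, let ψ = (α, β) : Fin 2 → ℂ, and let v : (Fin 2 × Fin 2 × Fin 2) → ℂ be the three-qubit vector v(i,j,k) = ψ i · φ₊(j,k), where φ₊ = (|01⟩+|10⟩)/√2. Let M = (H ⊗ₖ I ⊗ₖ I) * (CNOT ⊗ₖ I) as an 8×8 complex matrix. Then M.mulVec v = (1/2) • ( |00⟩⊗(β,α) + |01⟩⊗(α,β) + |10⟩⊗(−β,α) + |11⟩⊗(α,−β) ), where |q₀q₁⟩⊗w denotes the vector (i,j,k) ↦ [i=q₀][j=q₁]·w k. In words: after Alice's CNOT and Hadamard, the three-qubit state is an equal superposition of her four measurement outcomes, each paired with Bob's qubit in a state that is a fixed Pauli correction of ψ. -/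

import Mathlib

open Matrix Kronecker

/-- The Hadamard gate `H = (1/√2)!![1,1;1,-1]`. -/
noncomputable def Hgate : Matrix (Fin 2) (Fin 2) ℂ :=
  ((1 / Real.sqrt 2 : ℝ) : ℂ) • !![1, 1; 1, -1]

/-- The CNOT gate on two qubits (first factor control, second target):
it maps the basis vector `|i,j⟩` to `|i, i⊕j⟩`. -/
noncomputable def CNOT : Matrix (Fin 2 × Fin 2) (Fin 2 × Fin 2) ℂ :=
  Matrix.of fun p q => if p.1 = q.1 ∧ p.2 = q.1 + q.2 then 1 else 0

/-- The standard basis vector `|ij⟩` of the two-qubit space. -/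
noncomputable def ket (i j : Fin 2) : Fin 2 × Fin 2 → ℂ :=
  fun p => if p = (i, j) then 1 else 0

/-- The Bell state `φ₊ = (|01⟩ + |10⟩)/√2`. -/
noncomputable def phiPlus : Fin 2 × Fin 2 → ℂ :=
  ((1 / Real.sqrt 2 : ℝ) : ℂ) • (ket 0 1 + ket 1 0)

/-- The three-qubit vector `|q₀q₁⟩ ⊗ w`, i.e. `(i,j,k) ↦ [i=q₀][j=q₁]·w k`. -/
noncomputable def ket3 (q₀ q₁ : Fin 2) (w : Fin 2 → ℂ) : Fin 2 × Fin 2 × Fin 2 → ℂ :=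
  fun p => (if p.1 = q₀ then 1 else 0) * (if p.2.1 = q₁ then 1 else 0) * w p.2.2

/-- Alice's teleportation operation `M = (H ⊗ I ⊗ I) * (CNOT ⊗ I)` as an 8×8 matrix
on the three-qubit space `Fin 2 × Fin 2 × Fin 2`. -/
noncomputable def M : Matrix (Fin 2 × Fin 2 × Fin 2) (Fin 2 × Fin 2 × Fin 2) ℂ :=
  (Matrix.reindex (Equiv.prodAssoc (Fin 2) (Fin 2) (Fin 2))
      (Equiv.prodAssoc (Fin 2) (Fin 2) (Fin 2))
      ((Hgate ⊗ₖ (1 : Matrix (Fin 2) (Fin 2) ℂ)) ⊗ₖ (1 : Matrix (Fin 2) (Fin 2) ℂ))) *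
  (Matrix.reindex (Equiv.prodAssoc (Fin 2) (Fin 2) (Fin 2))
      (Equiv.prodAssoc (Fin 2) (Fin 2) (Fin 2))
      (CNOT ⊗ₖ (1 : Matrix (Fin 2) (Fin 2) ℂ)))

/-! Tensoring with the identity makes each gate act on Alice's qubits alone: `CNOT ⊗ I` replaces
`v (i, j, k)` by `v (i, j - i, k)`, and `H ⊗ I ⊗ I` then combines the two values of Alice's first
qubit. Since `φ₊ (j, k) = [j ≠ k] / √2`, every coordinate of the result is `α / 2` or `± β / 2`. -/

section KroneckerOne

variable {R α β γ : Type*} [Semiring R] [Fintype α] [Fintype β] [Fintype γ] [DecidableEq γ]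

theorem kronecker_one_mulVec {ι : Type*} (A : Matrix ι α R) (v : α × γ → R) :
    (A ⊗ₖ (1 : Matrix γ γ R)) *ᵥ v = fun p => (A *ᵥ fun a => v (a, p.2)) p.1 := by
  funext ⟨i, c⟩
  simp only [mulVec, dotProduct, kroneckerMap_apply, one_apply, mul_ite, mul_one, mul_zero,
    ite_mul, zero_mul, Fintype.sum_prod_type, Finset.sum_ite_eq, Finset.mem_univ, if_true]

theorem reindex_prodAssoc_kronecker_one_mulVec {ι κ : Type*}
    (A : Matrix (ι × κ) (α × β) R) (v : α × β × γ → R) :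
    reindex (Equiv.prodAssoc ι κ γ) (Equiv.prodAssoc α β γ) (A ⊗ₖ (1 : Matrix γ γ R)) *ᵥ v =
      fun x => (A *ᵥ fun q => v (q.1, q.2, x.2.2)) (x.1, x.2.1) := by
  rw [reindex_apply, submatrix_mulVec_equiv, kronecker_one_mulVec]
  rfl

end KroneckerOne

theorem CNOT_mulVec (u : Fin 2 × Fin 2 → ℂ) : CNOT *ᵥ u = fun p => u (p.1, p.2 - p.1) := by
  funext ⟨i, j⟩
  have hq : ∀ q : Fin 2 × Fin 2, (i = q.1 ∧ j = q.1 + q.2) ↔ (i, j - i) = q := by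
    rintro ⟨a, b⟩
    simp only [Prod.ext_iff, sub_eq_iff_eq_add]
    constructor <;> rintro ⟨rfl, rfl⟩ <;> exact ⟨rfl, add_comm _ _⟩
  simp only [CNOT, mulVec, dotProduct, of_apply, ite_mul, one_mul, zero_mul, hq,
    Finset.sum_ite_eq, Finset.mem_univ, if_true]

theorem Hgate_mulVec (w : Fin 2 → ℂ) :
    Hgate *ᵥ w = ((1 / Real.sqrt 2 : ℝ) : ℂ) • ![w 0 + w 1, w 0 - w 1] := by
  funext i
  fin_cases i <;> simp [Hgate, mulVec, dotProduct, Fin.sum_univ_two] <;> ring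

theorem phiPlus_apply (j k : Fin 2) :
    phiPlus (j, k) = ((1 / Real.sqrt 2 : ℝ) : ℂ) * if j = k then 0 else 1 := by
  fin_cases j <;> fin_cases k <;> simp [phiPlus, ket]

theorem M_mulVec (v : Fin 2 × Fin 2 × Fin 2 → ℂ) :
    M *ᵥ v = fun x => (Hgate *ᵥ fun a => v (a, x.2.1 - a, x.2.2)) x.1 := by
  rw [M, ← mulVec_mulVec, reindex_prodAssoc_kronecker_one_mulVec,
    reindex_prodAssoc_kronecker_one_mulVec]
  funext x
  simp only [kronecker_one_mulVec, CNOT_mulVec]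

/-- **Quantum teleportation identity**: after Alice's CNOT and Hadamard, the
three-qubit state `ψ ⊗ φ₊` becomes an equal superposition of her four
measurement outcomes, each paired with Bob's qubit in a fixed Pauli
correction of `ψ = (α, β)`. -/
theorem quantum_teleportation (α β : ℂ) :
    M.mulVec (fun p => ![α, β] p.1 * phiPlus p.2) =
      (1/2 : ℂ) • (ket3 0 0 ![β, α] + ket3 0 1 ![α, β]
        + ket3 1 0 ![-β, α] + ket3 1 1 ![α, -β]) := by
  rw [M_mulVec]
  funext ⟨i, j, k⟩
  simp only [Hgate_mulVec, phiPlus_apply]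
  generalize hc : ((1 / Real.sqrt 2 : ℝ) : ℂ) = c
  have hc2 : c ^ 2 = 1 / 2 := by
    rw [← hc, ← Complex.ofReal_pow, div_pow, Real.sq_sqrt zero_le_two]
    norm_num
  fin_cases i <;> fin_cases j <;> fin_cases k <;>
    simp [ket3, show (-1 : Fin 2) = 1 from rfl] <;>
    ring_nf <;> rw [hc2] <;> ring
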